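/- Assume the objective f(u,y) = f₁(u) + f₂(y) with f₁, f₂ convex continuous and Θ₂ = {θ : f₂*(θ) < ∞} bounded. Let c(ξ,h) = f₁(Û_f g) + f₂(ξ_{p T_ini+1}h,…,ξ_{p(T_ini+T_f)}h) + λ_ini‖(ξ₁h,…,ξ_{p T_ini}h)‖₁ with h = (g, −1). Then for every h, sup_{Q ∈ B_ε(δ_{ξ̂})} E_Q[c(ξ,h)] ≤ c(ξ̂,h) + ε·max{ sup_{θ∈Θ₂}‖θ‖_∞ · ‖(g,0)‖_*, λ_ini·‖h‖_* }, where B_ε(δ_{ξ̂}) is the 1-Wasserstein ball of radius ε (in the norm ‖ξ‖_W = Σⱼ‖ξⱼ‖) around the Dirac at the measured data ξ̂, with each block ξⱼ supported on Ξⱼ ⊆ ℝ^{T−T_ini−T_f+2}. -/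

import Mathlib

open MeasureTheory
open scoped ENNReal BigOperators

/-- The convex conjugate `f*(θ) = sup_s ⟨θ,s⟩ - f(s)`. -/
noncomputable def fenchelConj {n : ℕ} (f : (Fin n → ℝ) → ℝ) (θ : Fin n → ℝ) : EReal :=
  ⨆ s : Fin n → ℝ, (((∑ j, θ j * s j) - f s : ℝ) : EReal)

/-- The dual norm `‖θ‖_* = sup_{‖y‖ ≤ 1} ⟨θ, y⟩` of a norm `N`. -/
noncomputable def dualNorm {n : ℕ} (N : (Fin n → ℝ) → ℝ) (θ : Fin n → ℝ) : ℝ :=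
  sSup {r : ℝ | ∃ y : Fin n → ℝ, N y ≤ 1 ∧ r = ∑ i, θ i * y i}

/-- The 1-Wasserstein distance for a given transportation cost, as the infimum of
transport costs over all couplings. -/
noncomputable def wassersteinDist {α : Type*} [MeasurableSpace α]
    (cost : α → α → ℝ) (Q R : Measure α) : ℝ≥0∞ :=
  ⨅ P : {P : Measure (α × α) // P.map Prod.fst = Q ∧ P.map Prod.snd = R},
    ∫⁻ p, ENNReal.ofReal (cost p.1 p.2) ∂P.1

/-!
The bound already holds pointwise, with `L = max{S ‖(g,0)‖_*, λ_ini ‖h‖_*}` and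
`S = sup_{θ ∈ Θ₂} ‖θ‖_∞`: `c(ξ,h) ≤ c(ξ̂,h) + L Σⱼ N(ξⱼ - ξ̂ⱼ)`.
By Hahn–Banach a convex continuous `f₂` has a subgradient at every point, and every
subgradient lies in `Θ₂`, so `f₂` is `S`-Lipschitz for the `ℓ¹` norm. Future rows of `ξ` and
`ξ̂` end in `0`, so pairing their difference with `h = (g,-1)` is pairing it with `(g,0)`,
which costs at most `N(ξⱼ - ξ̂ⱼ) ‖(g,0)‖_*`; the `ℓ¹` penalty on past rows is
`λ_ini ‖h‖_*`-Lipschitz in the same way. Every coupling of `Q` with `δ_ξ̂` is supported on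
`{η = ξ̂}`, so the Wasserstein bound says `E_Q Σⱼ N(ξⱼ - ξ̂ⱼ) ≤ ε`; integrate.
-/

open Finset Bornology Matrix

structure IsNorm {n : ℕ} (N : (Fin n → ℝ) → ℝ) : Prop where
  nonneg : ∀ x, 0 ≤ N x
  eq_zero_iff : ∀ x, N x = 0 ↔ x = 0
  smul : ∀ (a : ℝ) x, N (a • x) = |a| * N x
  add_le : ∀ x y, N (x + y) ≤ N x + N y

lemma abs_dotProduct_le_norm_mul_sum_abs {ι : Type*} [Fintype ι] (v w : ι → ℝ) :
    |v ⬝ᵥ w| ≤ ‖v‖ * ∑ i, |w i| := by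
  rw [mul_sum]
  refine (abs_sum_le_sum_abs _ _).trans (sum_le_sum fun i _ => ?_)
  rw [abs_mul]
  exact mul_le_mul_of_nonneg_right (by simpa using norm_le_pi_norm v i) (abs_nonneg _)

namespace IsNorm

variable {n : ℕ} {N : (Fin n → ℝ) → ℝ}

lemma map_zero (hN : IsNorm N) : N 0 = 0 := (hN.eq_zero_iff 0).2 rfl

lemma map_neg (hN : IsNorm N) (x : Fin n → ℝ) : N (-x) = N x := by
  simpa using hN.smul (-1) x

lemma convexOn (hN : IsNorm N) : ConvexOn ℝ Set.univ N := by
  refine ⟨convex_univ, fun x _ y _ a b ha hb _ => ?_⟩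
  calc N (a • x + b • y) ≤ N (a • x) + N (b • y) := hN.add_le _ _
    _ = a • N x + b • N y := by
      rw [hN.smul, hN.smul, abs_of_nonneg ha, abs_of_nonneg hb, smul_eq_mul, smul_eq_mul]

protected lemma continuous (hN : IsNorm N) : Continuous N :=
  continuousOn_univ.1 (hN.convexOn.continuousOn isOpen_univ)

lemma exists_pos_mul_norm_le (hN : IsNorm N) : ∃ m > 0, ∀ x, m * ‖x‖ ≤ N x := by
  obtain ⟨m, hm, hmN⟩ := (isCompact_sphere (0 : Fin n → ℝ) 1).exists_forall_le'
    hN.continuous.continuousOn fun u hu => (hN.nonneg u).lt_of_ne fun h =>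
      by simp [((hN.eq_zero_iff u).1 h.symm)] at hu
  refine ⟨m, hm, fun x => ?_⟩
  rcases eq_or_ne x 0 with rfl | hx
  · simp [hN.map_zero]
  have hx' : 0 < ‖x‖ := norm_pos_iff.2 hx
  have hu : ‖x‖⁻¹ • x ∈ Metric.sphere (0 : Fin n → ℝ) 1 := by
    simp [norm_smul, hx'.ne']
  calc m * ‖x‖ ≤ N (‖x‖⁻¹ • x) * ‖x‖ := mul_le_mul_of_nonneg_right (hmN _ hu) hx'.le
    _ = N x := by rw [hN.smul, abs_of_pos (inv_pos.2 hx')]; field_simp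

lemma bddAbove_dualNorm_set (hN : IsNorm N) (θ : Fin n → ℝ) :
    BddAbove {r : ℝ | ∃ y : Fin n → ℝ, N y ≤ 1 ∧ r = θ ⬝ᵥ y} := by
  obtain ⟨m, hm, hmN⟩ := hN.exists_pos_mul_norm_le
  refine ⟨(∑ i, |θ i|) * m⁻¹, ?_⟩
  rintro _ ⟨y, hy, rfl⟩
  have hy' : ‖y‖ ≤ m⁻¹ := by
    rw [← one_div, le_div_iff₀ hm, mul_comm]
    exact (hmN y).trans hy
  calc θ ⬝ᵥ y ≤ |y ⬝ᵥ θ| := dotProduct_comm θ y ▸ le_abs_self _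
    _ ≤ ‖y‖ * ∑ i, |θ i| := abs_dotProduct_le_norm_mul_sum_abs y θ
    _ ≤ (∑ i, |θ i|) * m⁻¹ := by
      rw [mul_comm]; exact mul_le_mul_of_nonneg_left hy' (sum_nonneg fun i _ => abs_nonneg _)

lemma le_dualNorm (hN : IsNorm N) (θ : Fin n → ℝ) {y : Fin n → ℝ} (hy : N y ≤ 1) :
    θ ⬝ᵥ y ≤ dualNorm N θ :=
  le_csSup (hN.bddAbove_dualNorm_set θ) ⟨y, hy, rfl⟩

lemma dualNorm_nonneg (hN : IsNorm N) (θ : Fin n → ℝ) : 0 ≤ dualNorm N θ := by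
  simpa using hN.le_dualNorm θ (y := 0) (by simp [hN.map_zero])

lemma dotProduct_le_mul_dualNorm (hN : IsNorm N) (θ x : Fin n → ℝ) :
    θ ⬝ᵥ x ≤ N x * dualNorm N θ := by
  rcases (hN.nonneg x).eq_or_lt with hx | hx
  · simp [(hN.eq_zero_iff x).1 hx.symm, hN.map_zero]
  have h := hN.le_dualNorm θ (y := (N x)⁻¹ • x)
    (by rw [hN.smul, abs_of_pos (inv_pos.2 hx), inv_mul_cancel₀ hx.ne'])
  rw [dotProduct_smul, smul_eq_mul, inv_mul_le_iff₀ hx] at h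
  exact h

lemma abs_dotProduct_le_mul_dualNorm (hN : IsNorm N) (x θ : Fin n → ℝ) :
    |x ⬝ᵥ θ| ≤ N x * dualNorm N θ := by
  have h := hN.dotProduct_le_mul_dualNorm θ (-x)
  rw [hN.map_neg, dotProduct_neg] at h
  rw [dotProduct_comm, abs_le]
  exact ⟨by linarith, hN.dotProduct_le_mul_dualNorm θ x⟩

end IsNorm

lemma LinearMap.apply_single_dotProduct {ι R : Type*} [Fintype ι] [DecidableEq ι]
    [CommSemiring R]    (φ : (ι → R) →ₗ[R] R) (v : ι → R) :
    (fun i => φ (Pi.single i 1)) ⬝ᵥ v = φ v := by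
  conv_rhs => rw [← univ_sum_single v, map_sum]
  refine sum_congr rfl fun i _ => ?_
  rw [mul_comm, ← smul_eq_mul, ← map_smul, ← Pi.single_smul, smul_eq_mul, mul_one]

section Subgradient

variable {n : ℕ} {f : (Fin n → ℝ) → ℝ}

/-- `Θ₂` of the paper when `f = f₂`. -/
def fenchelDom (f : (Fin n → ℝ) → ℝ) : Set (Fin n → ℝ) := {θ | fenchelConj f θ < ⊤}

lemma ConvexOn.exists_subgradient (hf : ConvexOn ℝ Set.univ f) (hfc : Continuous f)
    (x : Fin n → ℝ) : ∃ θ : Fin n → ℝ, ∀ y, f x + θ ⬝ᵥ (y - x) ≤ f y := by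
  have hconv : Convex ℝ {p : (Fin n → ℝ) × ℝ | f p.1 < p.2} := by
    simpa using hf.convex_strict_epigraph
  have hopen : IsOpen {p : (Fin n → ℝ) × ℝ | f p.1 < p.2} :=
    isOpen_lt (hfc.comp continuous_fst) continuous_snd
  obtain ⟨ℓ, hℓ⟩ := geometric_hahn_banach_open_point hconv hopen
    (show (x, f x) ∉ _ from lt_irrefl (f x))
  set φ : (Fin n → ℝ) →ₗ[ℝ] ℝ := ℓ.toLinearMap ∘ₗ LinearMap.inl ℝ _ ℝ
  set β := ℓ (0, 1)
  have hℓ_apply : ∀ y t, ℓ (y, t) = φ y + t * β := by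
    intro y t
    rw [show (y, t) = (y, 0) + t • ((0 : Fin n → ℝ), (1 : ℝ)) by simp, map_add, map_smul,
      smul_eq_mul]
    rfl
  have hβ : β < 0 := by
    have := hℓ (x, f x + 1) (by simp)
    rw [hℓ_apply, hℓ_apply] at this
    linarith
  have hsep : ∀ y, φ y + f y * β ≤ φ x + f x * β := by
    intro y
    rw [← hℓ_apply, ← hℓ_apply]
    -- `(y, t)` lies in the strict epigraph for `t > f y`; let `t ↓ f y`.
    have hcont := (ℓ.continuous.comp (Continuous.prodMk_right y)).tendsto (f y)
    refine le_of_tendsto (hcont.mono_left (nhdsWithin_le_nhds (s := Set.Ioi (f y)))) ?_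
    exact eventually_nhdsWithin_of_forall fun t ht => (hℓ (y, t) ht).le
  refine ⟨(-β)⁻¹ • fun i => φ (Pi.single i 1), fun y => ?_⟩
  rw [smul_dotProduct, φ.apply_single_dotProduct, map_sub, smul_eq_mul, ← div_eq_inv_mul,
    ← le_sub_iff_add_le', div_le_iff₀ (neg_pos.2 hβ)]
  linarith [hsep y]

lemma mem_fenchelDom_of_subgradient {θ x : Fin n → ℝ} (hθ : ∀ y, f x + θ ⬝ᵥ (y - x) ≤ f y) :
    θ ∈ fenchelDom f := by
  refine lt_of_le_of_lt (iSup_le fun y => ?_) (EReal.coe_lt_top (θ ⬝ᵥ x - f x))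
  have := hθ y
  rw [dotProduct_sub] at this
  exact EReal.coe_le_coe_iff.2 (by change θ ⬝ᵥ y - f y ≤ _; linarith)

lemma ConvexOn.sub_le_mul_sum_abs_sub (hf : ConvexOn ℝ Set.univ f) (hfc : Continuous f)
    (hdom : IsBounded (fenchelDom f)) (x y : Fin n → ℝ) :
    f y - f x ≤ sSup (norm '' fenchelDom f) * ∑ k, |y k - x k| := by
  obtain ⟨θ, hθ⟩ := hf.exists_subgradient hfc y
  obtain ⟨C, hC⟩ := hdom.exists_norm_le
  have hθS : ‖θ‖ ≤ sSup (norm '' fenchelDom f) :=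
    le_csSup ⟨C, Set.forall_mem_image.2 hC⟩ ⟨θ, mem_fenchelDom_of_subgradient hθ, rfl⟩
  have := hθ x
  calc f y - f x ≤ θ ⬝ᵥ (y - x) := by rw [← neg_sub y x, dotProduct_neg] at this; linarith
    _ ≤ ‖θ‖ * ∑ k, |(y - x) k| := (le_abs_self _).trans (abs_dotProduct_le_norm_mul_sum_abs θ _)
    _ ≤ _ := mul_le_mul_of_nonneg_right hθS (sum_nonneg fun k _ => abs_nonneg _)

end Subgradient

section Wasserstein

variable {α : Type*} [MeasurableSpace α] [MeasurableSingletonClass α] {cost : α → α → ℝ}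
  {Q : Measure α} {x₀ : α}

lemma lintegral_le_wassersteinDist_dirac (hc : Measurable fun x => cost x x₀) :
    ∫⁻ x, ENNReal.ofReal (cost x x₀) ∂Q ≤ wassersteinDist cost Q (Measure.dirac x₀) := by
  refine le_iInf fun ⟨P, hfst, hsnd⟩ => ?_
  have hsnd_ae : ∀ᵐ p ∂P, p.2 = x₀ :=
    ae_of_ae_map measurable_snd.aemeasurable
      (hsnd ▸ (ae_dirac_iff (measurableSet_singleton x₀)).2 rfl)
  refine le_of_eq ?_
  calc ∫⁻ x, ENNReal.ofReal (cost x x₀) ∂Q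
      = ∫⁻ p, ENNReal.ofReal (cost p.1 x₀) ∂P := by
        rw [← hfst, lintegral_map hc.ennreal_ofReal measurable_fst]
    _ = ∫⁻ p, ENNReal.ofReal (cost p.1 p.2) ∂P :=
        lintegral_congr_ae (hsnd_ae.mono fun p hp => by simp only [hp])

lemma integral_le_add_mul_of_wassersteinDist_dirac_le [IsProbabilityMeasure Q] {F : α → ℝ}
    {a L ε : ℝ} (hc₀ : ∀ x, 0 ≤ cost x x₀) (hc : Measurable fun x => cost x x₀) (hL : 0 ≤ L)
    (hε : 0 ≤ ε) (hF : Integrable F Q) (hFc : ∀ᵐ x ∂Q, F x ≤ a + L * cost x x₀)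
    (hQ : wassersteinDist cost Q (Measure.dirac x₀) ≤ ENNReal.ofReal ε) :
    ∫ x, F x ∂Q ≤ a + ε * L := by
  have hlint := (lintegral_le_wassersteinDist_dirac hc).trans hQ
  have hint : Integrable (cost · x₀) Q :=
    ⟨hc.aestronglyMeasurable, (hasFiniteIntegral_iff_ofReal (ae_of_all _ hc₀)).2
      (hlint.trans_lt ENNReal.ofReal_lt_top)⟩
  have hmean : ∫ x, cost x x₀ ∂Q ≤ ε := by
    rw [integral_eq_lintegral_of_nonneg_ae (ae_of_all _ hc₀) hc.aestronglyMeasurable]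
    exact ENNReal.toReal_le_of_le_ofReal hε hlint
  calc ∫ x, F x ∂Q ≤ ∫ x, a + L * cost x x₀ ∂Q :=
        integral_mono_ae hF ((integrable_const a).add (hint.const_mul L)) hFc
    _ = a + L * ∫ x, cost x x₀ ∂Q := by
        rw [integral_add (integrable_const a) (hint.const_mul L), integral_const,
          integral_const_mul, probReal_univ, one_smul]
    _ ≤ a + ε * L := by linarith [mul_le_mul_of_nonneg_left hmean hL]

end Wasserstein

lemma dotProduct_snoc {R : Type*} [CommSemiring R] {n : ℕ} (v : Fin (n + 1) → R) (g : Fin n → R)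
    (a : R) :
    v ⬝ᵥ Fin.snoc g a = Fin.init v ⬝ᵥ g + v (Fin.last n) * a := by
  simp [dotProduct, Fin.sum_univ_castSucc, Fin.init]

section DataCost

variable {ι : Type*} [Fintype ι] {m n : ℕ}

/-- `c(ξ, h)` of the paper, with `a = f₁(Û_f g)`. -/
def dataCost (a : ℝ) (f₂ : (Fin m → ℝ) → ℝ) (lam : ℝ) (h : Fin n → ℝ)
    (ξ : ι ⊕ Fin m → Fin n → ℝ) : ℝ :=
  a + f₂ (fun k => ξ (Sum.inr k) ⬝ᵥ h) + lam * ∑ j, |ξ (Sum.inl j) ⬝ᵥ h|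

lemma dataCost_le_add_mul_sum_norm_sub {N : (Fin (n + 1) → ℝ) → ℝ} (hN : IsNorm N)
    {f₂ : (Fin m → ℝ) → ℝ} (hf₂ : ConvexOn ℝ Set.univ f₂) (hf₂c : Continuous f₂)
    (hdom : IsBounded (fenchelDom f₂)) {lam : ℝ} (hlam : 0 ≤ lam) (a : ℝ) (g : Fin n → ℝ)
    {ξ ξ' : ι ⊕ Fin m → Fin (n + 1) → ℝ} (hξ : ∀ k, ξ (Sum.inr k) (Fin.last n) = 0)
    (hξ' : ∀ k, ξ' (Sum.inr k) (Fin.last n) = 0) :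
    dataCost a f₂ lam (Fin.snoc g (-1)) ξ ≤ dataCost a f₂ lam (Fin.snoc g (-1)) ξ'
      + max (sSup (norm '' fenchelDom f₂) * dualNorm N (Fin.snoc g 0))
          (lam * dualNorm N (Fin.snoc g (-1))) * ∑ j, N (ξ j - ξ' j) := by
  set h : Fin (n + 1) → ℝ := Fin.snoc g (-1)
  set S := sSup (norm '' fenchelDom f₂)
  set D₀ := dualNorm N (Fin.snoc g 0)
  set D := dualNorm N h
  have hS : 0 ≤ S := Real.sSup_nonneg (Set.forall_mem_image.2 fun θ _ => norm_nonneg θ)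
  have hfuture : f₂ (fun k => ξ (Sum.inr k) ⬝ᵥ h) - f₂ (fun k => ξ' (Sum.inr k) ⬝ᵥ h)
      ≤ S * D₀ * ∑ k, N (ξ (Sum.inr k) - ξ' (Sum.inr k)) :=
    calc _ ≤ S * ∑ k, |ξ (Sum.inr k) ⬝ᵥ h - ξ' (Sum.inr k) ⬝ᵥ h| :=
          hf₂.sub_le_mul_sum_abs_sub hf₂c hdom _ _
      _ ≤ S * ∑ k, N (ξ (Sum.inr k) - ξ' (Sum.inr k)) * D₀ := by
          refine mul_le_mul_of_nonneg_left (sum_le_sum fun k _ => ?_) hS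
          have hlast : (ξ (Sum.inr k) - ξ' (Sum.inr k)) ⬝ᵥ h
              = (ξ (Sum.inr k) - ξ' (Sum.inr k)) ⬝ᵥ Fin.snoc g 0 := by
            simp only [h, dotProduct_snoc, Pi.sub_apply, hξ k, hξ' k, sub_zero, zero_mul]
          rw [← sub_dotProduct, hlast]
          exact hN.abs_dotProduct_le_mul_dualNorm _ _
      _ = _ := by rw [← sum_mul]; ring
  have hpast : ∑ j, |ξ (Sum.inl j) ⬝ᵥ h|
      ≤ ∑ j, |ξ' (Sum.inl j) ⬝ᵥ h| + D * ∑ j, N (ξ (Sum.inl j) - ξ' (Sum.inl j)) := by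
    rw [mul_sum, ← sum_add_distrib]
    refine sum_le_sum fun j _ => ?_
    have := hN.abs_dotProduct_le_mul_dualNorm (ξ (Sum.inl j) - ξ' (Sum.inl j)) h
    rw [sub_dotProduct] at this
    linarith [abs_sub_abs_le_abs_sub (ξ (Sum.inl j) ⬝ᵥ h) (ξ' (Sum.inl j) ⬝ᵥ h)]
  have hF : 0 ≤ ∑ k, N (ξ (Sum.inr k) - ξ' (Sum.inr k)) := sum_nonneg fun k _ => hN.nonneg _
  have hP : 0 ≤ ∑ j, N (ξ (Sum.inl j) - ξ' (Sum.inl j)) := sum_nonneg fun j _ => hN.nonneg _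
  rw [Fintype.sum_sum_type, mul_add]
  simp only [dataCost]
  linarith [mul_le_mul_of_nonneg_right (le_max_left (S * D₀) (lam * D)) hF,
    mul_le_mul_of_nonneg_right (le_max_right (S * D₀) (lam * D)) hP,
    mul_le_mul_of_nonneg_left hpast hlam]

end DataCost

theorem tractable_reformulation_upper_bound_general
    (p Tini Tf mTf dg : ℕ)
    (N : (Fin (dg + 1) → ℝ) → ℝ)
    (hN0 : ∀ x, 0 ≤ N x) (hNeq : ∀ x, N x = 0 ↔ x = 0)
    (hNsmul : ∀ (a : ℝ) (x : Fin (dg + 1) → ℝ), N (a • x) = |a| * N x)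
    (hNadd : ∀ x y, N (x + y) ≤ N x + N y)
    (f₁ : (Fin mTf → ℝ) → ℝ)
    (f₂ : (Fin (p * Tf) → ℝ) → ℝ) (hf₂conv : ConvexOn ℝ Set.univ f₂)
    (hf₂cont : Continuous f₂)
    (hΘ₂bdd : Bornology.IsBounded {θ : Fin (p * Tf) → ℝ | fenchelConj f₂ θ < ⊤})
    (lamini : ℝ) (hlamini : 0 ≤ lamini)
    (Uf : Matrix (Fin mTf) (Fin dg) ℝ) (g : Fin dg → ℝ)
    (Ξ : (Fin (p * Tini) ⊕ Fin (p * Tf)) → Set (Fin (dg + 1) → ℝ))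
    (hΞfut : ∀ (k : Fin (p * Tf)), ∀ ξ ∈ Ξ (Sum.inr k), ξ (Fin.last dg) = 0)
    (ξhat : (Fin (p * Tini) ⊕ Fin (p * Tf)) → Fin (dg + 1) → ℝ)
    (hξhat : ∀ j, ξhat j ∈ Ξ j)
    (ε : ℝ) (hε : 0 ≤ ε)
    (Q : Measure ((Fin (p * Tini) ⊕ Fin (p * Tf)) → Fin (dg + 1) → ℝ))
    [IsProbabilityMeasure Q]
    (hsupp : ∀ᵐ ξ ∂Q, ∀ j, ξ j ∈ Ξ j)
    (hball : wassersteinDist (fun ξ η => ∑ j, N (ξ j - η j)) Q (Measure.dirac ξhat)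
      ≤ ENNReal.ofReal ε)
    (hint : Integrable (fun ξ : (Fin (p * Tini) ⊕ Fin (p * Tf)) → Fin (dg + 1) → ℝ =>
      f₁ (Uf.mulVec g)
        + f₂ (fun k => ∑ i, ξ (Sum.inr k) i * (Fin.snoc g (-1) : Fin (dg + 1) → ℝ) i)
        + lamini * ∑ j : Fin (p * Tini), |∑ i, ξ (Sum.inl j) i * (Fin.snoc g (-1) : Fin (dg + 1) → ℝ) i|) Q) :
    (∫ ξ, (f₁ (Uf.mulVec g)
        + f₂ (fun k => ∑ i, ξ (Sum.inr k) i * (Fin.snoc g (-1) : Fin (dg + 1) → ℝ) i)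
        + lamini * ∑ j : Fin (p * Tini), |∑ i, ξ (Sum.inl j) i * (Fin.snoc g (-1) : Fin (dg + 1) → ℝ) i|) ∂Q)
      ≤ (f₁ (Uf.mulVec g)
          + f₂ (fun k => ∑ i, ξhat (Sum.inr k) i * (Fin.snoc g (-1) : Fin (dg + 1) → ℝ) i)
          + lamini * ∑ j : Fin (p * Tini), |∑ i, ξhat (Sum.inl j) i * (Fin.snoc g (-1) : Fin (dg + 1) → ℝ) i|)
        + ε * max
            (sSup ((fun θ : Fin (p * Tf) → ℝ => ‖θ‖) ''
                {θ : Fin (p * Tf) → ℝ | fenchelConj f₂ θ < ⊤})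
              * dualNorm N (Fin.snoc g 0 : Fin (dg + 1) → ℝ))
            (lamini * dualNorm N (Fin.snoc g (-1) : Fin (dg + 1) → ℝ)) := by
  have hN : IsNorm N := ⟨hN0, hNeq, hNsmul, hNadd⟩
  refine integral_le_add_mul_of_wassersteinDist_dirac_le
    (fun ξ => sum_nonneg fun j _ => hN.nonneg _) (by have := hN.continuous; fun_prop)
    (le_max_of_le_right (mul_nonneg hlamini (hN.dualNorm_nonneg _))) hε hint
    (hsupp.mono fun ξ hξ => ?_) hball
  exact dataCost_le_add_mul_sum_norm_sub hN hf₂conv hf₂cont hΘ₂bdd hlamini _ g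
    (fun k => hΞfut k _ (hξ _)) (fun k => hΞfut k _ (hξhat _))

/-- Theorem 3 of the paper (Tractable Reformulation, inequality direction).
The rows of the random data are indexed by `Fin (p*Tini) ⊕ Fin (p*Tf)` (past/future
blocks), each row lives in `ℝ^{T−Tini−Tf+2}` (`= ℝ^{dg+1}`), `h = (g, −1)` and
`h̃ = (g, 0)`. For every probability measure `Q` in the 1-Wasserstein ball of radius
`ε` (for the norm `‖ξ‖_W = Σⱼ N(ξⱼ)`) around the Dirac at the measured data `ξ̂`, with
each block supported on `Ξⱼ` (future blocks having last entry `0`),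
`E_Q[c(ξ,h)] ≤ c(ξ̂,h) + ε·max{ sup_{θ∈Θ₂}‖θ‖_∞ ‖h̃‖_* , λ_ini‖h‖_* }`. -/
theorem tractable_reformulation_upper_bound
    (p Tini Tf T mTf dg : ℕ) (hdg : dg + 1 = T - Tini - Tf + 2)
    (N : (Fin (dg + 1) → ℝ) → ℝ)
    (hN0 : ∀ x, 0 ≤ N x) (hNeq : ∀ x, N x = 0 ↔ x = 0)
    (hNsmul : ∀ (a : ℝ) (x : Fin (dg + 1) → ℝ), N (a • x) = |a| * N x)
    (hNadd : ∀ x y, N (x + y) ≤ N x + N y)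
    (f₁ : (Fin mTf → ℝ) → ℝ) (hf₁conv : ConvexOn ℝ Set.univ f₁)
    (hf₁cont : Continuous f₁)
    (f₂ : (Fin (p * Tf) → ℝ) → ℝ) (hf₂conv : ConvexOn ℝ Set.univ f₂)
    (hf₂cont : Continuous f₂)
    (hΘ₂bdd : Bornology.IsBounded {θ : Fin (p * Tf) → ℝ | fenchelConj f₂ θ < ⊤})
    (lamini : ℝ) (hlamini : 0 ≤ lamini)
    (Uf : Matrix (Fin mTf) (Fin dg) ℝ) (g : Fin dg → ℝ)
    (Ξ : (Fin (p * Tini) ⊕ Fin (p * Tf)) → Set (Fin (dg + 1) → ℝ))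
    (hΞfut : ∀ (k : Fin (p * Tf)), ∀ ξ ∈ Ξ (Sum.inr k), ξ (Fin.last dg) = 0)
    (ξhat : (Fin (p * Tini) ⊕ Fin (p * Tf)) → Fin (dg + 1) → ℝ)
    (hξhat : ∀ j, ξhat j ∈ Ξ j)
    (ε : ℝ) (hε : 0 ≤ ε)
    (Q : Measure ((Fin (p * Tini) ⊕ Fin (p * Tf)) → Fin (dg + 1) → ℝ))
    [IsProbabilityMeasure Q]
    (hsupp : ∀ᵐ ξ ∂Q, ∀ j, ξ j ∈ Ξ j)
    (hball : wassersteinDist (fun ξ η => ∑ j, N (ξ j - η j)) Q (Measure.dirac ξhat)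
      ≤ ENNReal.ofReal ε)
    (hint : Integrable (fun ξ : (Fin (p * Tini) ⊕ Fin (p * Tf)) → Fin (dg + 1) → ℝ =>
      f₁ (Uf.mulVec g)
        + f₂ (fun k => ∑ i, ξ (Sum.inr k) i * (Fin.snoc g (-1) : Fin (dg + 1) → ℝ) i)
        + lamini * ∑ j : Fin (p * Tini), |∑ i, ξ (Sum.inl j) i * (Fin.snoc g (-1) : Fin (dg + 1) → ℝ) i|) Q) :
    (∫ ξ, (f₁ (Uf.mulVec g)
        + f₂ (fun k => ∑ i, ξ (Sum.inr k) i * (Fin.snoc g (-1) : Fin (dg + 1) → ℝ) i)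
        + lamini * ∑ j : Fin (p * Tini), |∑ i, ξ (Sum.inl j) i * (Fin.snoc g (-1) : Fin (dg + 1) → ℝ) i|) ∂Q)
      ≤ (f₁ (Uf.mulVec g)
          + f₂ (fun k => ∑ i, ξhat (Sum.inr k) i * (Fin.snoc g (-1) : Fin (dg + 1) → ℝ) i)
          + lamini * ∑ j : Fin (p * Tini), |∑ i, ξhat (Sum.inl j) i * (Fin.snoc g (-1) : Fin (dg + 1) → ℝ) i|)
        + ε * max
            (sSup ((fun θ : Fin (p * Tf) → ℝ => ‖θ‖) ''
                {θ : Fin (p * Tf) → ℝ | fenchelConj f₂ θ < ⊤})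
              * dualNorm N (Fin.snoc g 0 : Fin (dg + 1) → ℝ))
            (lamini * dualNorm N (Fin.snoc g (-1) : Fin (dg + 1) → ℝ)) :=
  tractable_reformulation_upper_bound_general p Tini Tf mTf dg N hN0 hNeq hNsmul hNadd f₁ f₂ hf₂conv
    hf₂cont hΘ₂bdd lamini hlamini Uf g Ξ hΞfut ξhat hξhat ε hε Q hsupp hball hint
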